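/- arXiv:2201.11993 — 2 statements merged into one kernel-verified Lean document; each statement's English description precedes it below -/
import Mathlib

section
/- Let α, β, γ, ζ be real constants with ζ ≠ 0, α ≠ 0, and β² - 4αγ > 0. Then the function e(x) = (√(β²-4αγ)/(2α)) · (1 + exp(x√(β²-4αγ)/ζ)·K)/(1 - exp(x√(β²-4αγ)/ζ)·K) - β/(2α), where K = (2αe₀ + β - √(β²-4αγ))/(2αe₀ + β + √(β²-4αγ)), satisfies the Riccati differential equation ζ·e'(x) = α·e(x)² + β·e(x) + γ on any interval around 0 where the denominator does not vanish, together with the initial condition e(0) = e₀ (assuming 2αe₀ + β + √(β²-4αγ) ≠ 0). -/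
/-!
Completing the square turns `α e² + β e + γ` into `(s² / 4α) (y² - 1)` for `e = (s y - β) / 2α`,
where `s = √(β² - 4αγ)`, so the Riccati equation becomes `y' = (k / 2) (y² - 1)` with `k = s / ζ`.
That equation is solved by the Cayley transform `y = (1 + w) / (1 - w)` of any solution of
`w' = k w`, here `w = K exp (k x)`; the constant `K` is the inverse Cayley transform of the
initial value `y(0) = (2α e₀ + β) / s`.
-/

open Real

theorem hasDerivAt_cayley {w : ℝ → ℝ} {k x : ℝ} (hw : HasDerivAt w (k * w x) x)
    (hw1 : 1 - w x ≠ 0) :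
    HasDerivAt (fun x => (1 + w x) / (1 - w x))
      (k / 2 * (((1 + w x) / (1 - w x)) ^ 2 - 1)) x := by
  refine ((hw.const_add 1).div (hw.const_sub 1) hw1).congr_deriv ?_
  field_simp
  ring

theorem cayley_sub_div_add {a s : ℝ} (has : a + s ≠ 0) (hs : s ≠ 0) :
    (1 + (a - s) / (a + s)) / (1 - (a - s) / (a + s)) = a / s := by
  have hsub : a + s - (a - s) ≠ 0 := by
    rw [show a + s - (a - s) = 2 * s by ring]
    exact mul_ne_zero two_ne_zero hs
  field_simp
  ring

theorem quadratic_eq_of_sq_eq_discrim {α β γ s : ℝ} (hα : α ≠ 0)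
    (hs : s ^ 2 = discrim α β γ) (y : ℝ) :
    α * (s / (2 * α) * y - β / (2 * α)) ^ 2 + β * (s / (2 * α) * y - β / (2 * α)) + γ =
      s ^ 2 / (4 * α) * (y ^ 2 - 1) := by
  rw [discrim] at hs
  field_simp
  linear_combination 4 * hs

theorem riccati_exact_solution_general
    (α β γ ζ e₀ : ℝ) (hα : α ≠ 0)
    (hD : β ^ 2 - 4 * α * γ > 0)
    (hden0 : 2 * α * e₀ + β + Real.sqrt (β ^ 2 - 4 * α * γ) ≠ 0)
    (K : ℝ)
    (hK : K = (2 * α * e₀ + β - Real.sqrt (β ^ 2 - 4 * α * γ)) /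
              (2 * α * e₀ + β + Real.sqrt (β ^ 2 - 4 * α * γ)))
    (e : ℝ → ℝ)
    (he : ∀ x : ℝ, e x =
      (Real.sqrt (β ^ 2 - 4 * α * γ) / (2 * α)) *
        (1 + Real.exp (x * Real.sqrt (β ^ 2 - 4 * α * γ) / ζ) * K) /
        (1 - Real.exp (x * Real.sqrt (β ^ 2 - 4 * α * γ) / ζ) * K) -
      β / (2 * α))
    (I : Set ℝ)
    (hdenom : ∀ x ∈ I, 1 - Real.exp (x * Real.sqrt (β ^ 2 - 4 * α * γ) / ζ) * K ≠ 0) :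
    e 0 = e₀ ∧
    ∀ x ∈ I, HasDerivAt e ((α * (e x) ^ 2 + β * (e x) + γ) / ζ) x := by
  set s := Real.sqrt (β ^ 2 - 4 * α * γ)
  have hs : s ^ 2 = discrim α β γ := sq_sqrt hD.le
  have hs0 : s ≠ 0 := (sqrt_pos.2 hD).ne'
  constructor
  · rw [he, zero_mul, zero_div, exp_zero, one_mul, mul_div_assoc, hK, cayley_sub_div_add hden0 hs0]
    field_simp
    ring
  · intro x hx
    have hw : HasDerivAt (fun x => exp (x * s / ζ) * K) (s / ζ * (exp (x * s / ζ) * K)) x := by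
      refine (((hasDerivAt_mul_const s).div_const ζ).exp.mul_const K).congr_deriv ?_
      ring
    have he' : e = fun x => s / (2 * α) * ((1 + exp (x * s / ζ) * K) / (1 - exp (x * s / ζ) * K))
        - β / (2 * α) := funext fun x => by rw [he, mul_div_assoc]
    rw [he', quadratic_eq_of_sq_eq_discrim hα hs]
    refine (((hasDerivAt_cayley hw (hdenom x hx)).const_mul (s / (2 * α))).sub_const
      (β / (2 * α))).congr_deriv ?_
    field_simp
    ring

theorem riccati_exact_solution
    (α β γ ζ e₀ : ℝ) (hζ : ζ ≠ 0) (hα : α ≠ 0)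
    (hD : β ^ 2 - 4 * α * γ > 0)
    (hden0 : 2 * α * e₀ + β + Real.sqrt (β ^ 2 - 4 * α * γ) ≠ 0)
    (K : ℝ)
    (hK : K = (2 * α * e₀ + β - Real.sqrt (β ^ 2 - 4 * α * γ)) /
              (2 * α * e₀ + β + Real.sqrt (β ^ 2 - 4 * α * γ)))
    (e : ℝ → ℝ)
    (he : ∀ x : ℝ, e x =
      (Real.sqrt (β ^ 2 - 4 * α * γ) / (2 * α)) *
        (1 + Real.exp (x * Real.sqrt (β ^ 2 - 4 * α * γ) / ζ) * K) /
        (1 - Real.exp (x * Real.sqrt (β ^ 2 - 4 * α * γ) / ζ) * K) -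
      β / (2 * α))
    (I : Set ℝ) (hI : Set.OrdConnected I) (hI0 : (0 : ℝ) ∈ I) (hIopen : IsOpen I)
    (hdenom : ∀ x ∈ I, 1 - Real.exp (x * Real.sqrt (β ^ 2 - 4 * α * γ) / ζ) * K ≠ 0) :
    e 0 = e₀ ∧
    ∀ x ∈ I, HasDerivAt e ((α * (e x) ^ 2 + β * (e x) + γ) / ζ) x :=
  riccati_exact_solution_general α β γ ζ e₀ hα hD hden0 K hK e he I hdenom
end

section
/- Let A_p be a finite set and for each a ∈ A_p and each j = 0, …, μ let η_a(y^j) ≥ 0 with η_a(y^j) ≥ η_a(y^μ) for all j ≤ μ. Let R_j ⊆ A_p satisfy Θ_R · Σ_{a∈A_p} η_a(y^{j-1}) ≤ Σ_{a∈R_j} η_a(y^{j-1}) for Θ_R ∈ (0,1), and let C_set ⊆ A_p satisfy Σ_{a∈C_set} η_a(y^μ) ≤ Θ_C · Σ_{a∈A_p} η_a(y^μ) for Θ_C ∈ (0,1). If (1/4)·Θ_R·μ ≥ Θ_C + C for some C > 0, then (3/4)·Σ_{j=1}^{μ} Σ_{a∈R_j} η_a(y^{j-1}) ≥ 3·Σ_{a∈C_set}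 η_a(y^μ) + 3·C·Σ_{a∈A_p} η_a(y^μ). -/
theorem discretization_decrease_chain
    {α : Type*} [DecidableEq α]
    (Ap : Finset α) (μ : ℕ) (hμ : 0 < μ)
    (η : ℕ → α → ℝ)
    (hnonneg : ∀ j ≤ μ, ∀ a ∈ Ap, 0 ≤ η j a)
    (hmono : ∀ j ≤ μ, ∀ a ∈ Ap, η j a ≥ η μ a)
    (R : ℕ → Finset α) (hRsub : ∀ j ∈ Finset.Icc 1 μ, R j ⊆ Ap)
    (ΘR ΘC C : ℝ) (hΘR : ΘR ∈ Set.Ioo (0 : ℝ) 1) (hΘC : ΘC ∈ Set.Ioo (0 : ℝ) 1)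
    (hC : 0 < C)
    (hmark : ∀ j ∈ Finset.Icc 1 μ,
      ΘR * ∑ a ∈ Ap, η (j - 1) a ≤ ∑ a ∈ R j, η (j - 1) a)
    (Cset : Finset α) (hCsub : Cset ⊆ Ap)
    (hcoarsen : ∑ a ∈ Cset, η μ a ≤ ΘC * ∑ a ∈ Ap, η μ a)
    (hparam : (1 / 4) * ΘR * (μ : ℝ) ≥ ΘC + C) :
    (3 / 4) * ∑ j ∈ Finset.Icc 1 μ, ∑ a ∈ R j, η (j - 1) a ≥
      3 * ∑ a ∈ Cset, η μ a + 3 * C * ∑ a ∈ Ap, η μ a := by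
  set S : ℝ := ∑ a ∈ Ap, η μ a with hS
  have hS0 : 0 ≤ S := Finset.sum_nonneg fun a ha => hnonneg μ le_rfl a ha
  have hkey : ∀ j ∈ Finset.Icc 1 μ, ΘR * S ≤ ∑ a ∈ R j, η (j - 1) a := by
    intro j hj
    refine le_trans ?_ (hmark j hj)
    apply mul_le_mul_of_nonneg_left _ hΘR.1.le
    apply Finset.sum_le_sum
    intro a ha
    exact hmono (j - 1) (le_trans (Nat.sub_le j 1) (Finset.mem_Icc.mp hj).2) a ha
  have hsum : (μ : ℝ) * (ΘR * S) ≤ ∑ j ∈ Finset.Icc 1 μ, ∑ a ∈ R j, η (j - 1) a := by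
    have := Finset.card_nsmul_le_sum (Finset.Icc 1 μ) (fun j => ∑ a ∈ R j, η (j - 1) a)
      (ΘR * S) hkey
    simpa [Nat.card_Icc, nsmul_eq_mul] using this
  have h1 : (3 / 4) * ((μ : ℝ) * (ΘR * S)) ≤
      (3 / 4) * ∑ j ∈ Finset.Icc 1 μ, ∑ a ∈ R j, η (j - 1) a := by
    apply mul_le_mul_of_nonneg_left hsum; norm_num
  have h2 : 3 * ∑ a ∈ Cset, η μ a + 3 * C * S ≤ 3 * (ΘC + C) * S := by
    nlinarith [hcoarsen]
  have h3 : 3 * (ΘC + C) * S ≤ (3 / 4) * ((μ : ℝ) * (ΘR * S)) := by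
    nlinarith [mul_le_mul_of_nonneg_right hparam hS0]
  linarith
end
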